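/- arXiv:1912.11863 — 2 statements merged into one kernel-verified Lean document; each statement's English description precedes it below -/
import Mathlib

section
/- Assume F has bounded variation along x̄ uniformly over A with cumulative variation function η, hypotheses (C1) and (C2) hold for some δ̄ > 0 with η^{δ̄}(T) < +∞, and take δ ∈ (0, δ̄). Let F̃ be the multifunction obtained from F by replacing its values at the endpoints by the one-sided limits (F̃(S,x,a) := F(S⁺,x,a) for |x − x̄(S)| ≤ δ, F̃(T,x,a) := F(T⁻,x,a) for |x − x̄(T)| ≤ δ, F̃ := F otherwise), and let η̃ be its cumulative variation function. Then η̃(t) − η̃(s) = η(t) − η(s) for every subinterval [s,t] ⊂ (S,T). -/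
open Set Metric Filter MeasureTheory
open scoped ENNReal Topology Classical

noncomputable section

/-- Euclidean space `ℝ^n`. -/
abbrev Eucl (n : ℕ) : Type := EuclideanSpace ℝ (Fin n)

/-- A (strict) partition `a = τ 0 < τ 1 < ⋯ < τ N = b` of the interval `[a,b]`. -/
def IsPartition (a b : ℝ) (N : ℕ) (τ : ℕ → ℝ) : Prop :=
  0 < N ∧ τ 0 = a ∧ τ N = b ∧ ∀ i < N, τ i < τ (i + 1)

/-- The mesh (diameter) of the partition `τ` is at most `ε`. -/
def MeshLE (N : ℕ) (τ : ℕ → ℝ) (ε : ℝ) : Prop :=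
  ∀ i < N, τ (i + 1) - τ i ≤ ε

/-- The tube `x̄([s,t]) + δ B` around the arc `x̄` on `[s,t]`. -/
def tube {n : ℕ} (xbar : ℝ → Eucl n) (s t δ : ℝ) : Set (Eucl n) :=
  {y | ∃ r ∈ Icc s t, dist y (xbar r) ≤ δ}

/-- `I^δ(𝒯) = Σᵢ sup { d_H (F(t_{i+1},x,a), F(t_i,x,a)) : x ∈ x̄([t_i,t_{i+1}]) + δB, a ∈ A }`. -/
def variSum {n k : ℕ} (F : ℝ → Eucl n → Eucl k → Set (Eucl n)) (xbar : ℝ → Eucl n)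
    (A : Set (Eucl k)) (δ : ℝ) (N : ℕ) (τ : ℕ → ℝ) : ℝ≥0∞ :=
  ∑ i ∈ Finset.range N,
    ⨆ x ∈ tube xbar (τ i) (τ (i + 1)) δ, ⨆ a ∈ A,
      EMetric.hausdorffEdist (F (τ (i + 1)) x a) (F (τ i) x a)

/-- `η^δ_ε(t)`: the `(δ,ε)`-perturbed cumulative variation of `F` along `x̄`, uniformly
over `A`, on the base interval `[S,t]`.  (For `t = S` there are no partitions and the
supremum is `0`.) -/
def etaE {n k : ℕ} (F : ℝ → Eucl n → Eucl k → Set (Eucl n)) (xbar : ℝ → Eucl n)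
    (A : Set (Eucl k)) (S δ ε t : ℝ) : ℝ≥0∞ :=
  ⨆ (N : ℕ) (τ : ℕ → ℝ) (_ : IsPartition S t N τ) (_ : MeshLE N τ ε),
    variSum F xbar A δ N τ

/-- `η^δ(t) = lim_{ε ↓ 0} η^δ_ε(t)` (the limit of a monotone family: the infimum). -/
def etaD {n k : ℕ} (F : ℝ → Eucl n → Eucl k → Set (Eucl n)) (xbar : ℝ → Eucl n)
    (A : Set (Eucl k)) (S δ t : ℝ) : ℝ≥0∞ :=
  ⨅ (ε : ℝ) (_ : 0 < ε), etaE F xbar A S δ ε t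

/-- `η(t) = lim_{δ ↓ 0} η^δ(t)`: the cumulative variation function of `F` along `x̄`,
uniformly over `A`. -/
def eta {n k : ℕ} (F : ℝ → Eucl n → Eucl k → Set (Eucl n)) (xbar : ℝ → Eucl n)
    (A : Set (Eucl k)) (S t : ℝ) : ℝ≥0∞ :=
  ⨅ (δ : ℝ) (_ : 0 < δ), etaD F xbar A S δ t

/-- Hypothesis (C1): nonempty closed values, measurability in `t`, and uniform
boundedness `F(t,x,a) ⊆ cB` near the arc. -/
def HypC1 {n k : ℕ} (F : ℝ → Eucl n → Eucl k → Set (Eucl n)) (xbar : ℝ → Eucl n)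
    (A : Set (Eucl k)) (S T δbar : ℝ) : Prop :=
  (∀ t x a, (F t x a).Nonempty ∧ IsClosed (F t x a)) ∧
  (∀ (x : Eucl n) (a : Eucl k), ∀ U : Set (Eucl n), IsOpen U →
     MeasurableSet {t | t ∈ Icc S T ∧ (F t x a ∩ U).Nonempty}) ∧
  (∃ c > (0 : ℝ), ∀ t ∈ Icc S T, ∀ a ∈ A, ∀ x : Eucl n, dist x (xbar t) ≤ δbar →
     F t x a ⊆ closedBall 0 c)

/-- Hypothesis (C2): `F(t,x,a) ⊆ F(t,x',a') + γ(|x-x'| + |a-a'|)B` near the arc, where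
`γ` is a modulus of continuity. -/
def HypC2 {n k : ℕ} (F : ℝ → Eucl n → Eucl k → Set (Eucl n)) (xbar : ℝ → Eucl n)
    (A : Set (Eucl k)) (S T δbar : ℝ) (γ : ℝ → ℝ) : Prop :=
  ContinuousOn γ (Ici 0) ∧ MonotoneOn γ (Ici 0) ∧ γ 0 = 0 ∧ (∀ r ≥ (0 : ℝ), 0 ≤ γ r) ∧
  ∀ t ∈ Icc S T, ∀ x x' : Eucl n, ∀ a ∈ A, ∀ a' ∈ A,
    dist x (xbar t) ≤ δbar → dist x' (xbar t) ≤ δbar →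
    ∀ y ∈ F t x a, ∃ z ∈ F t x' a', dist y z ≤ γ (dist x x' + dist a a')

end

noncomputable section

/-- The multifunction `F̃` obtained from `F` by replacing the endpoint values near the
arc by the one-sided limits `Fp` (at `S`) and `Fm` (at `T`). -/
def endpointMod {n k : ℕ} (S T δ : ℝ) (xbar : ℝ → Eucl n)
    (F : ℝ → Eucl n → Eucl k → Set (Eucl n))
    (Fp Fm : Eucl n → Eucl k → Set (Eucl n)) : ℝ → Eucl n → Eucl k → Set (Eucl n) :=
  fun t x a =>
    if t = S ∧ dist x (xbar S) ≤ δ then Fp x a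
    else if t = T ∧ dist x (xbar T) ≤ δ then Fm x a
    else F t x a

end


/-!
The cumulative variation is additive: for `S < s < t`, `η(t) = η(s) + η(s,t)`, where `η(s,t)`
is the same construction on the base interval `[s,t]`. Concatenating partitions gives `≥`;
for `≤`, a partition of `[S,t]` is split at `s`, which costs only a slight enlargement of
the tube, controlled by the uniform continuity of `x̄`. Since `F̃ = F` on `(S,T)`, both
increments are then `η(s,t)`, provided `η(s)` and `η̃(s)` are finite. Changing the values at
`S` alters each `I^δ(𝒯)` by at most the Hausdorff distance between `F(S,·,·)` and
`F(S⁺,·,·)`, which (C1) and the one-sided limit bound uniformly, so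
`η̃(s) ≤ η(s) + C ≤ η(T) + C < ∞`.
-/

lemma forall_lt_add_iff {m K : ℕ} {P : ℕ → Prop} :
    (∀ i < m + K, P i) ↔ (∀ i < m, P i) ∧ ∀ j < K, P (m + j) := by
  refine ⟨fun h => ⟨fun i hi => h i (by omega), fun j hj => h (m + j) (by omega)⟩, ?_⟩
  rintro ⟨h₁, h₂⟩ i hi
  rcases lt_or_ge i m with him | him
  · exact h₁ i him
  · simpa [Nat.add_sub_cancel' him] using h₂ (i - m) (by omega)

namespace IsPartition

variable {a b c s : ℝ} {N m K : ℕ} {τ τ' : ℕ → ℝ}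

lemma le_of_le (h : IsPartition a b N τ) {i j : ℕ} (hij : i ≤ j) (hj : j ≤ N) :
    τ i ≤ τ j := by
  induction j, hij using Nat.le_induction with
  | base => exact le_rfl
  | succ j _ ih => exact (ih (by omega)).trans (h.2.2.2 j (by omega)).le

lemma mem_Icc (h : IsPartition a b N τ) {i : ℕ} (hi : i ≤ N) : τ i ∈ Icc a b :=
  ⟨h.2.1 ▸ h.le_of_le i.zero_le hi, h.2.2.1 ▸ h.le_of_le hi le_rfl⟩

lemma congr (h : IsPartition a b N τ) (h' : ∀ i ≤ N, τ i = τ' i) :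
    IsPartition a b N τ' := by
  obtain ⟨hN, h0, hb, hlt⟩ := h
  refine ⟨hN, h' 0 N.zero_le ▸ h0, h' N le_rfl ▸ hb, fun i hi => ?_⟩
  rw [← h' i hi.le, ← h' (i + 1) hi]
  exact hlt i hi

lemma add_iff (hm : 0 < m) (hK : 0 < K) (hb : τ m = b) :
    IsPartition a c (m + K) τ ↔
      IsPartition a b m τ ∧ IsPartition b c K (fun j => τ (m + j)) := by
  have hmK : 0 < m + K := by omega
  simp only [IsPartition, forall_lt_add_iff, hb, add_zero, ← add_assoc, hm, hK, hmK, true_and]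
  tauto

lemma exists_mem_Ico (h : IsPartition a b N τ) (hs : s ∈ Ico a b) :
    ∃ m K, N = m + 1 + K ∧ s ∈ Ico (τ m) (τ (m + 1)) := by
  have hex : ∃ j, s < τ j := ⟨N, h.2.2.1 ▸ hs.2⟩
  have hj0 : Nat.find hex ≠ 0 := fun h0 => by
    have := Nat.find_spec hex
    rw [h0, h.2.1] at this
    exact this.not_ge hs.1
  have hjN : Nat.find hex ≤ N := Nat.find_min' hex (h.2.2.1 ▸ hs.2)
  refine ⟨Nat.find hex - 1, N - Nat.find hex, by omega,
    not_lt.1 (Nat.find_min hex (by omega)), ?_⟩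
  rw [Nat.sub_add_cancel (Nat.one_le_iff_ne_zero.2 hj0)]
  exact Nat.find_spec hex

lemma min_of_mem_Ioc (h : IsPartition a b (m + 1 + K) τ) (hs : s ∈ Ioc (τ m) (τ (m + 1))) :
    IsPartition a s (m + 1) (fun i => min (τ i) s) := by
  have hτs : ∀ i ≤ m, τ i < s := fun i hi => (h.le_of_le hi (by omega)).trans_lt hs.1
  refine ⟨m.succ_pos, (min_eq_left (hτs 0 m.zero_le).le).trans h.2.1, min_eq_right hs.2,
    fun i hi => ?_⟩
  exact lt_min ((min_le_left _ _).trans_lt (h.2.2.2 i (by omega)))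
    ((min_le_left _ _).trans_lt (hτs i (by omega)))

lemma max_of_mem_Ico (h : IsPartition a b (m + 1 + K) τ) (hs : s ∈ Ico (τ m) (τ (m + 1))) :
    IsPartition s b (K + 1) (fun j => max (τ (m + j)) s) := by
  have hsτ : ∀ j, 1 ≤ j → j ≤ K + 1 → s < τ (m + j) :=
    fun j hj hjK => hs.2.trans_le (h.le_of_le (by omega) (by omega))
  refine ⟨K.succ_pos, by simp [hs.1], ?_, fun j hj => ?_⟩
  · dsimp only
    rw [max_eq_left (hsτ (K + 1) (by omega) le_rfl).le, ← h.2.2.1]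
    congr 1
    omega
  · dsimp only
    rw [max_eq_left (hsτ (j + 1) (by omega) (by omega)).le]
    exact max_lt (h.2.2.2 (m + j) (by omega)) (hsτ (j + 1) (by omega) (by omega))

end IsPartition

namespace MeshLE

variable {a b s ε : ℝ} {N m K : ℕ} {τ τ' : ℕ → ℝ}

lemma congr (h : MeshLE N τ ε) (h' : ∀ i ≤ N, τ i = τ' i) : MeshLE N τ' ε := by
  intro i hi
  rw [← h' i hi.le, ← h' (i + 1) hi]
  exact h i hi

lemma add_iff : MeshLE (m + K) τ ε ↔ MeshLE m τ ε ∧ MeshLE K (fun j => τ (m + j)) ε := by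
  simp only [MeshLE, forall_lt_add_iff, ← add_assoc]

lemma min (h : MeshLE (m + 1 + K) τ ε) (hp : IsPartition a b (m + 1 + K) τ) :
    MeshLE (m + 1) (fun i => min (τ i) s) ε := by
  intro i hi
  simp only [min_def]
  split_ifs <;> linarith [h i (by omega), hp.2.2.2 i (by omega)]

lemma max (h : MeshLE (m + 1 + K) τ ε) (hp : IsPartition a b (m + 1 + K) τ) :
    MeshLE (K + 1) (fun j => max (τ (m + j)) s) ε := by
  intro j hj
  simp only [max_def, ← add_assoc]
  split_ifs <;> linarith [h (m + j) (by omega), hp.2.2.2 (m + j) (by omega)]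

end MeshLE

lemma exists_partition_meshLE {a b ε : ℝ} (hab : a < b) (hε : 0 < ε) :
    ∃ N τ, IsPartition a b N τ ∧ MeshLE N τ ε := by
  obtain ⟨N, hN⟩ := exists_nat_gt ((b - a) / ε)
  have hN0 : (0 : ℝ) < N := (div_pos (sub_pos.2 hab) hε).trans hN
  have hstep : (b - a) / N ≤ ε := by
    rw [div_le_iff₀ hN0]
    rw [div_lt_iff₀ hε] at hN
    linarith
  refine ⟨N, fun i => a + i * ((b - a) / N),
    ⟨by exact_mod_cast hN0, by simp, ?_, fun i _ => ?_⟩, fun i _ => ?_⟩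
  · field_simp
    ring
  · push_cast
    nlinarith [div_pos (sub_pos.2 hab) hN0]
  · push_cast
    linarith

section Variation

variable {n k : ℕ}

noncomputable def variStep (G : ℝ → Eucl n → Eucl k → Set (Eucl n)) (xbar : ℝ → Eucl n)
    (A : Set (Eucl k)) (δ u v : ℝ) : ℝ≥0∞ :=
  ⨆ x ∈ tube xbar u v δ, ⨆ a ∈ A, hausdorffEDist (G v x a) (G u x a)

variable {G G' : ℝ → Eucl n → Eucl k → Set (Eucl n)} {xbar : ℝ → Eucl n}
  {A : Set (Eucl k)} {S s t u v w δ δ' ε : ℝ} {N m K : ℕ} {τ τ' : ℕ → ℝ}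

lemma le_variStep {x : Eucl n} {a : Eucl k} (hx : x ∈ tube xbar u v δ) (ha : a ∈ A) :
    hausdorffEDist (G v x a) (G u x a) ≤ variStep G xbar A δ u v :=
  le_iSup₂_of_le x hx (le_iSup₂_of_le a ha le_rfl)

lemma variSum_eq_sum_variStep :
    variSum G xbar A δ N τ = ∑ i ∈ Finset.range N, variStep G xbar A δ (τ i) (τ (i + 1)) :=
  rfl

lemma variSum_add : variSum G xbar A δ (m + K) τ
    = variSum G xbar A δ m τ + variSum G xbar A δ K (fun j => τ (m + j)) := by
  simp only [variSum_eq_sum_variStep, Finset.sum_range_add, add_assoc]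

lemma variSum_one : variSum G xbar A δ 1 τ = variStep G xbar A δ (τ 0) (τ 1) := by
  simp [variSum_eq_sum_variStep]

lemma variSum_congr (h : ∀ i ≤ N, τ i = τ' i) :
    variSum G xbar A δ N τ = variSum G xbar A δ N τ' :=
  Finset.sum_congr rfl fun i hi => by
    rw [Finset.mem_range] at hi
    rw [h i hi.le, h (i + 1) hi]

lemma variSum_congr_of_eqOn (h : EqOn G G' (Icc S t)) (hp : IsPartition S t N τ) :
    variSum G xbar A δ N τ = variSum G' xbar A δ N τ :=
  Finset.sum_congr rfl fun i hi => by
    rw [Finset.mem_range] at hi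
    simp only [h (hp.mem_Icc hi.le), h (hp.mem_Icc hi)]

lemma tube_mono (h : δ ≤ δ') : tube xbar u v δ ⊆ tube xbar u v δ' :=
  fun _ ⟨r, hr, hd⟩ => ⟨r, hr, hd.trans h⟩

lemma variStep_mono (h : δ ≤ δ') : variStep G xbar A δ u v ≤ variStep G xbar A δ' u v :=
  biSup_mono fun _ hx => tube_mono h hx

lemma variSum_mono (h : δ ≤ δ') : variSum G xbar A δ N τ ≤ variSum G xbar A δ' N τ :=
  Finset.sum_le_sum fun _ _ => variStep_mono h

lemma variStep_le_add
    (h : ∀ x ∈ tube xbar u v δ, x ∈ tube xbar u w δ' ∧ x ∈ tube xbar w v δ') :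
    variStep G xbar A δ u v ≤ variStep G xbar A δ' u w + variStep G xbar A δ' w v := by
  refine iSup₂_le fun x hx => iSup₂_le fun a ha => ?_
  calc hausdorffEDist (G v x a) (G u x a)
      ≤ hausdorffEDist (G w x a) (G u x a) + hausdorffEDist (G v x a) (G w x a) := by
        rw [add_comm]
        exact hausdorffEDist_triangle
    _ ≤ _ := add_le_add (le_variStep (h x hx).1 ha) (le_variStep (h x hx).2 ha)

lemma variStep_le_add_of_left {C : ℝ≥0∞} (hv : G v = G' v)
    (hC : ∀ x, ∀ a ∈ A, hausdorffEDist (G' u x a) (G u x a) ≤ C) :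
    variStep G xbar A δ u v ≤ variStep G' xbar A δ u v + C := by
  refine iSup₂_le fun x hx => iSup₂_le fun a ha => ?_
  calc hausdorffEDist (G v x a) (G u x a)
      ≤ hausdorffEDist (G' v x a) (G' u x a) + hausdorffEDist (G' u x a) (G u x a) := by
        rw [hv]
        exact hausdorffEDist_triangle
    _ ≤ _ := add_le_add (le_variStep hx ha) (hC x a ha)

lemma variSum_le_add_of_mem_Ioo (hp : IsPartition S t (m + 1 + K) τ)
    (hs : s ∈ Ioo (τ m) (τ (m + 1))) (hδ : δ ≤ δ')
    (htube : tube xbar (τ m) (τ (m + 1)) δ ⊆ closedBall (xbar s) δ') :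
    variSum G xbar A δ (m + 1 + K) τ ≤ variSum G xbar A δ' (m + 1) (fun i => min (τ i) s)
      + variSum G xbar A δ' (K + 1) (fun j => max (τ (m + j)) s) := by
  have hmin : ∀ i ≤ m, min (τ i) s = τ i :=
    fun i hi => min_eq_left ((hp.le_of_le hi (by omega)).trans hs.1.le)
  have hmax : ∀ j ≤ K, max (τ (m + (1 + j))) s = τ (m + 1 + j) := fun j hj => by
    rw [← add_assoc]
    exact max_eq_left (hs.2.le.trans (hp.le_of_le (by omega) (by omega)))
  have h₁ : variSum G xbar A δ' (m + 1) (fun i => min (τ i) s)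
      = variSum G xbar A δ' m τ + variStep G xbar A δ' (τ m) s := by
    rw [variSum_add, variSum_one, variSum_congr hmin]
    simp only [add_zero, hmin m le_rfl, min_eq_right hs.2.le]
  have h₂ : variSum G xbar A δ' (K + 1) (fun j => max (τ (m + j)) s)
      = variStep G xbar A δ' s (τ (m + 1))
        + variSum G xbar A δ' K (fun j => τ (m + 1 + j)) := by
    rw [add_comm K 1, variSum_add, variSum_one, variSum_congr hmax]
    simp only [add_zero, max_eq_right hs.1.le, max_eq_left hs.2.le]
  have hsplit : ∀ x ∈ tube xbar (τ m) (τ (m + 1)) δ,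
      x ∈ tube xbar (τ m) s δ' ∧ x ∈ tube xbar s (τ (m + 1)) δ' := fun x hx =>
    ⟨⟨s, ⟨hs.1.le, le_rfl⟩, htube hx⟩, ⟨s, ⟨le_rfl, hs.2.le⟩, htube hx⟩⟩
  calc variSum G xbar A δ (m + 1 + K) τ
      = variSum G xbar A δ m τ + variStep G xbar A δ (τ m) (τ (m + 1))
        + variSum G xbar A δ K (fun j => τ (m + 1 + j)) := by
        rw [variSum_add, variSum_add, variSum_one, add_zero]
    _ ≤ variSum G xbar A δ' m τ
          + (variStep G xbar A δ' (τ m) s + variStep G xbar A δ' s (τ (m + 1)))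
        + variSum G xbar A δ' K (fun j => τ (m + 1 + j)) :=
        add_le_add (add_le_add (variSum_mono hδ) (variStep_le_add hsplit)) (variSum_mono hδ)
    _ = _ := by
        rw [h₁, h₂]
        ring

end Variation

section CumulativeVariation

variable {n k : ℕ} {G G' : ℝ → Eucl n → Eucl k → Set (Eucl n)} {xbar : ℝ → Eucl n}
  {A : Set (Eucl k)} {S s t δ δ' ε ε' : ℝ} {N : ℕ} {τ : ℕ → ℝ}

lemma le_etaE (hp : IsPartition S t N τ) (hm : MeshLE N τ ε) :
    variSum G xbar A δ N τ ≤ etaE G xbar A S δ ε t :=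
  le_iSup_of_le N <| le_iSup_of_le τ <| le_iSup_of_le hp <| le_iSup_of_le hm le_rfl

lemma etaE_le {c : ℝ≥0∞}
    (h : ∀ N τ, IsPartition S t N τ → MeshLE N τ ε → variSum G xbar A δ N τ ≤ c) :
    etaE G xbar A S δ ε t ≤ c :=
  iSup_le fun N => iSup_le fun τ => iSup_le fun hp => iSup_le fun hm => h N τ hp hm

lemma etaE_eq_biSup : etaE G xbar A S δ ε t = ⨆ p : ℕ × (ℕ → ℝ),
    ⨆ (_ : IsPartition S t p.1 p.2 ∧ MeshLE p.1 p.2 ε), variSum G xbar A δ p.1 p.2 := by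
  simp only [etaE, iSup_prod, iSup_and]

lemma etaE_mono_eps (h : ε ≤ ε') : etaE G xbar A S δ ε t ≤ etaE G xbar A S δ ε' t :=
  etaE_le fun _ _ hp hm => le_etaE hp fun i hi => (hm i hi).trans h

lemma etaD_le_etaE (hε : 0 < ε) : etaD G xbar A S δ t ≤ etaE G xbar A S δ ε t :=
  iInf₂_le ε hε

lemma etaD_mono (h : δ ≤ δ') : etaD G xbar A S δ t ≤ etaD G xbar A S δ' t :=
  iInf₂_mono fun _ _ => etaE_le fun _ _ hp hm => (variSum_mono h).trans (le_etaE hp hm)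

lemma eta_le_etaD (hδ : 0 < δ) : eta G xbar A S t ≤ etaD G xbar A S δ t :=
  iInf₂_le δ hδ

lemma etaE_add_etaE_le (hε : 0 < ε) (hSs : S < s) (hst : s < t) :
    etaE G xbar A S δ ε s + etaE G xbar A s δ ε t ≤ etaE G xbar A S δ ε t := by
  obtain ⟨_, _, h₁⟩ := exists_partition_meshLE hSs hε
  obtain ⟨_, _, h₂⟩ := exists_partition_meshLE hst hε
  rw [etaE_eq_biSup, etaE_eq_biSup]
  refine ENNReal.biSup_add_biSup_le' ⟨(_, _), h₁⟩ ⟨(_, _), h₂⟩ ?_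
  rintro ⟨N₁, τ₁⟩ ⟨hp₁, hm₁⟩ ⟨N₂, τ₂⟩ ⟨hp₂, hm₂⟩
  dsimp only at hp₁ hm₁ hp₂ hm₂ ⊢
  set τ : ℕ → ℝ := fun i => if i ≤ N₁ then τ₁ i else τ₂ (i - N₁)
  have e₁ : ∀ i ≤ N₁, τ₁ i = τ i := fun i hi => (if_pos hi).symm
  have e₂ : ∀ j ≤ N₂, τ₂ j = τ (N₁ + j) := fun j _ => by
    rcases j.eq_zero_or_pos with rfl | hj
    · simp [τ, hp₁.2.2.1, hp₂.2.1]
    · simp [τ, show ¬N₁ + j ≤ N₁ by omega]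
  have hp : IsPartition S t (N₁ + N₂) τ :=
    (IsPartition.add_iff hp₁.1 hp₂.1 ((e₁ N₁ le_rfl).symm.trans hp₁.2.2.1)).2
      ⟨hp₁.congr e₁, hp₂.congr e₂⟩
  have hm : MeshLE (N₁ + N₂) τ ε := MeshLE.add_iff.2 ⟨hm₁.congr e₁, hm₂.congr e₂⟩
  calc variSum G xbar A δ N₁ τ₁ + variSum G xbar A δ N₂ τ₂
      = variSum G xbar A δ (N₁ + N₂) τ := by
        rw [variSum_add, variSum_congr e₁, variSum_congr e₂]
    _ ≤ _ := le_etaE hp hm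

lemma eta_add_eta_le (hSs : S < s) (hst : s < t) :
    eta G xbar A S s + eta G xbar A s t ≤ eta G xbar A S t :=
  le_iInf₂ fun _ hδ => le_iInf₂ fun _ hε =>
    (add_le_add ((eta_le_etaD hδ).trans (etaD_le_etaE hε))
      ((eta_le_etaD hδ).trans (etaD_le_etaE hε))).trans (etaE_add_etaE_le hε hSs hst)

lemma variSum_le_etaE_add_etaE (hSs : S < s) (hst : s < t) (hδ : δ ≤ δ')
    (hosc : ∀ u ∈ Icc S t, ∀ v ∈ Icc S t, dist u v ≤ ε →
      dist (xbar u) (xbar v) ≤ δ' - δ)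
    (hp : IsPartition S t N τ) (hm : MeshLE N τ ε) :
    variSum G xbar A δ N τ ≤ etaE G xbar A S δ' ε s + etaE G xbar A s δ' ε t := by
  obtain ⟨m, K, rfl, hsm⟩ := hp.exists_mem_Ico ⟨hSs.le, hst⟩
  rcases hsm.1.eq_or_lt with hnode | hτs
  · have hm0 : 0 < m := Nat.pos_of_ne_zero fun h0 => by
      rw [h0, hp.2.1] at hnode
      exact hSs.ne hnode
    rw [add_assoc] at hp hm ⊢
    obtain ⟨hp₁, hp₂⟩ := (IsPartition.add_iff hm0 (by omega) hnode).1 hp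
    obtain ⟨hm₁, hm₂⟩ := MeshLE.add_iff.1 hm
    rw [variSum_add]
    exact add_le_add ((variSum_mono hδ).trans (le_etaE hp₁ hm₁))
      ((variSum_mono hδ).trans (le_etaE hp₂ hm₂))
  · have htube : tube xbar (τ m) (τ (m + 1)) δ ⊆ closedBall (xbar s) δ' := by
      rintro x ⟨r, hr, hxr⟩
      have hr' : r ∈ Icc S t :=
        ⟨(hp.mem_Icc (by omega)).1.trans hr.1, hr.2.trans (hp.mem_Icc (by omega)).2⟩
      have hrs : dist r s ≤ ε := by
        have := hm m (by omega)
        rw [Real.dist_eq, abs_le]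
        constructor <;> linarith [hr.1, hr.2, hsm.2]
      rw [mem_closedBall]
      linarith [dist_triangle x (xbar r) (xbar s), hosc r hr' s ⟨hSs.le, hst.le⟩ hrs]
    exact (variSum_le_add_of_mem_Ioo hp ⟨hτs, hsm.2⟩ hδ htube).trans
      (add_le_add (le_etaE (hp.min_of_mem_Ioc ⟨hτs, hsm.2.le⟩) (hm.min hp))
        (le_etaE (hp.max_of_mem_Ico hsm) (hm.max hp)))

lemma eta_add (hSs : S < s) (hst : s < t) (hx : ContinuousOn xbar (Icc S t)) :
    eta G xbar A S t = eta G xbar A S s + eta G xbar A s t := by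
  refine le_antisymm ?_ (eta_add_eta_le hSs hst)
  refine ENNReal.le_iInf₂_add_iInf₂ fun δ₁ hδ₁ δ₂ hδ₂ => ?_
  set δ := min δ₁ δ₂
  have hδ : 0 < δ := lt_min hδ₁ hδ₂
  obtain ⟨ε₀, hε₀, hosc⟩ := Metric.uniformContinuousOn_iff_le.1
    (isCompact_Icc.uniformContinuousOn_of_continuous hx) (δ / 2) (half_pos hδ)
  calc eta G xbar A S t ≤ etaD G xbar A S (δ / 2) t := eta_le_etaD (half_pos hδ)
    _ ≤ etaD G xbar A S δ s + etaD G xbar A s δ t := by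
        refine ENNReal.le_iInf₂_add_iInf₂ fun ε₁ hε₁ ε₂ hε₂ => ?_
        set ε := min (min ε₁ ε₂) ε₀
        calc etaD G xbar A S (δ / 2) t ≤ etaE G xbar A S (δ / 2) ε t :=
              etaD_le_etaE (lt_min (lt_min hε₁ hε₂) hε₀)
          _ ≤ etaE G xbar A S δ ε s + etaE G xbar A s δ ε t :=
              etaE_le fun _ _ hp hm => variSum_le_etaE_add_etaE hSs hst (half_le_self hδ.le)
                (fun u hu v hv huv => by
                  linarith [hosc u hu v hv (huv.trans (min_le_right _ _))]) hp hm
          _ ≤ _ := add_le_add (etaE_mono_eps ((min_le_left _ _).trans (min_le_left _ _)))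
              (etaE_mono_eps ((min_le_left _ _).trans (min_le_right _ _)))
    _ ≤ _ := add_le_add (etaD_mono (min_le_left _ _)) (etaD_mono (min_le_right _ _))

lemma eta_congr (h : EqOn G G' (Icc S t)) : eta G xbar A S t = eta G' xbar A S t := by
  have : ∀ δ ε, etaE G xbar A S δ ε t = etaE G' xbar A S δ ε t := fun _ _ =>
    iSup_congr fun _ => iSup_congr fun _ => iSup_congr fun hp => iSup_congr fun _ =>
      variSum_congr_of_eqOn h hp
  simp only [eta, etaD, this]

lemma variSum_le_add_of_eqOn_Ioc {C : ℝ≥0∞} (h : EqOn G G' (Ioc S t))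
    (hC : ∀ x, ∀ a ∈ A, hausdorffEDist (G' S x a) (G S x a) ≤ C)
    (hp : IsPartition S t N τ) :
    variSum G xbar A δ N τ ≤ variSum G' xbar A δ N τ + C := by
  obtain ⟨M, rfl⟩ : ∃ M, N = 1 + M := ⟨N - 1, by have := hp.1; omega⟩
  have hτ : ∀ i, 1 ≤ i → i ≤ 1 + M → G (τ i) = G' (τ i) := fun i h₁ h₂ =>
    h ⟨hp.2.1 ▸ (hp.2.2.2 0 hp.1).trans_le (hp.le_of_le h₁ h₂), (hp.mem_Icc h₂).2⟩
  have htail : variSum G xbar A δ M (fun j => τ (1 + j))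
      = variSum G' xbar A δ M (fun j => τ (1 + j)) :=
    Finset.sum_congr rfl fun j hj => by
      rw [Finset.mem_range] at hj
      simp only [hτ (1 + j) (by omega) (by omega), hτ (1 + (j + 1)) (by omega) (by omega)]
  rw [variSum_add, variSum_add, htail, add_right_comm, variSum_one, variSum_one]
  gcongr
  rw [hp.2.1]
  exact variStep_le_add_of_left (hτ 1 le_rfl (by omega)) hC

lemma eta_le_eta_add_of_eqOn_Ioc {C : ℝ≥0∞} (h : EqOn G G' (Ioc S t))
    (hC : ∀ x, ∀ a ∈ A, hausdorffEDist (G' S x a) (G S x a) ≤ C) :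
    eta G xbar A S t ≤ eta G' xbar A S t + C := by
  simp only [eta, etaD, ENNReal.iInf₂_add]
  exact iInf₂_mono fun _ _ => iInf₂_mono fun _ _ => etaE_le fun _ _ hp hm =>
    (variSum_le_add_of_eqOn_Ioc h hC hp).trans (add_le_add (le_etaE hp hm) le_rfl)

end CumulativeVariation

lemma hausdorffEDist_le_of_tendsto {E ι : Type*} [PseudoMetricSpace E] {l : Filter ι} [l.NeBot]
    {X Y : Set E} {Z : ι → Set E} {z : E} {c : ℝ} (hX : X.Nonempty)
    (hXc : X ⊆ closedBall z c)
    (hZ : ∀ᶠ i in l, (Z i).Nonempty ∧ Z i ⊆ closedBall z c)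
    (hZY : Tendsto (fun i => hausdorffEDist (Z i) Y) l (𝓝 0)) :
    hausdorffEDist X Y ≤ 2 * ENNReal.ofReal c + 1 := by
  obtain ⟨i, ⟨hZne, hZc⟩, hi⟩ := (hZ.and (hZY.eventually_lt_const one_pos)).exists
  have hc : 0 ≤ c := by
    obtain ⟨x, hx⟩ := hX
    exact dist_nonneg.trans (mem_closedBall.1 (hXc hx))
  calc hausdorffEDist X Y ≤ hausdorffEDist X (Z i) + hausdorffEDist (Z i) Y :=
        hausdorffEDist_triangle
    _ ≤ ediam (closedEBall z (ENNReal.ofReal c)) + 1 := by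
        gcongr
        rw [closedEBall_ofReal hc]
        exact (hausdorffEDist_le_ediam hX hZne).trans (ediam_mono (union_subset hXc hZc))
    _ ≤ 2 * ENNReal.ofReal c + 1 := by
        gcongr
        exact ediam_closedEBall_le

lemma hausdorffEDist_endpointMod_le {n k : ℕ} {S T δ δbar c : ℝ} {xbar : ℝ → Eucl n}
    {A : Set (Eucl k)} {F : ℝ → Eucl n → Eucl k → Set (Eucl n)}
    {Fp Fm : Eucl n → Eucl k → Set (Eucl n)} (hST : S < T) (hδ : δ < δbar)
    (hx : ContinuousWithinAt xbar (Icc S T) S) (hne : ∀ t x a, (F t x a).Nonempty)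
    (hc : ∀ t ∈ Icc S T, ∀ a ∈ A, ∀ x : Eucl n, dist x (xbar t) ≤ δbar →
      F t x a ⊆ closedBall 0 c)
    (hFp : ∀ x ∈ closedBall (xbar S) δ, ∀ a ∈ A,
      Tendsto (fun s => hausdorffEDist (F s x a) (Fp x a)) (𝓝[Ioc S T] S) (𝓝 0)) :
    ∀ x, ∀ a ∈ A, hausdorffEDist (F S x a) (endpointMod S T δ xbar F Fp Fm S x a)
      ≤ 2 * ENNReal.ofReal c + 1 := by
  intro x a ha
  by_cases hxS : dist x (xbar S) ≤ δ
  · simp only [endpointMod, hxS, and_self, if_true]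
    have := left_nhdsWithin_Ioc_neBot hST
    have hnear : ∀ᶠ u in 𝓝[Ioc S T] S, dist (xbar u) (xbar S) < δbar - δ :=
      Metric.tendsto_nhds.1 (hx.mono Ioc_subset_Icc_self) _ (sub_pos.2 hδ)
    refine hausdorffEDist_le_of_tendsto (hne S x a)
      (hc S ⟨le_rfl, hST.le⟩ a ha x (hxS.trans hδ.le)) ?_ (hFp x (mem_closedBall.2 hxS) a ha)
    filter_upwards [hnear, self_mem_nhdsWithin] with u hu huST
    refine ⟨hne u x a, hc u (Ioc_subset_Icc_self huST) a ha x ?_⟩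
    linarith [dist_triangle x (xbar S) (xbar u), dist_comm (xbar u) (xbar S)]
  · simp [endpointMod, hxS, hST.ne]

theorem stmt7_general {n k : ℕ} (S T : ℝ) (hST : S < T)
    (A : Set (Eucl k))
    (F : ℝ → Eucl n → Eucl k → Set (Eucl n))
    (xbar : ℝ → Eucl n) (hx : ContinuousOn xbar (Icc S T))
    (hBV : eta F xbar A S T < ⊤)
    (δbar : ℝ)
    (hC1 : HypC1 F xbar A S T δbar)
    (δ : ℝ) (hδδ : δ < δbar)
    (Fp Fm : Eucl n → Eucl k → Set (Eucl n))
    (hFp : ∀ x ∈ closedBall (xbar S) δ, ∀ a ∈ A,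
      Tendsto (fun s => EMetric.hausdorffEdist (F s x a) (Fp x a)) (𝓝[Ioc S T] S) (𝓝 0)) :
    ∀ s t : ℝ, S < s → s ≤ t → t < T →
      eta (endpointMod S T δ xbar F Fp Fm) xbar A S t
          - eta (endpointMod S T δ xbar F Fp Fm) xbar A S s
        = eta F xbar A S t - eta F xbar A S s := by
  intro s t hSs hst htT
  rcases hst.eq_or_lt with rfl | hst
  · simp
  obtain ⟨c, -, hc⟩ := hC1.2.2
  have hmod : EqOn (endpointMod S T δ xbar F Fp Fm) F (Ioo S T) := fun u hu => by
    funext x a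
    simp [endpointMod, hu.1.ne', hu.2.ne]
  have hηs : eta F xbar A S s < ⊤ :=
    (le_self_add.trans (eta_add_eta_le hSs (hst.trans htT))).trans_lt hBV
  have hηmod : eta (endpointMod S T δ xbar F Fp Fm) xbar A S s ≠ ⊤ :=
    ((eta_le_eta_add_of_eqOn_Ioc (hmod.mono (Ioc_subset_Ioo_right (hst.trans htT)))
      (hausdorffEDist_endpointMod_le hST hδδ (hx S ⟨le_rfl, hST.le⟩)
        (fun t x a => (hC1.1 t x a).1) hc hFp)).trans_lt
      (ENNReal.add_lt_top.2 ⟨hηs, by finiteness⟩)).ne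
  have hxt : ContinuousOn xbar (Icc S t) := hx.mono (Icc_subset_Icc_right htT.le)
  rw [eta_add hSs hst hxt, eta_add hSs hst hxt, eta_congr (hmod.mono (Icc_subset_Ioo hSs htT)),
    ENNReal.add_sub_cancel_left hηmod, ENNReal.add_sub_cancel_left hηs.ne]

/-- The cumulative variation functions of `F` and of its
endpoint-modification `F̃` have equal increments over subintervals of `(S,T)`:
`η̃(t) − η̃(s) = η(t) − η(s)` for all `[s,t] ⊆ (S,T)`. -/
theorem stmt7 {n k : ℕ} (S T : ℝ) (hST : S < T)
    (A : Set (Eucl k)) (hA : IsCompact A)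
    (F : ℝ → Eucl n → Eucl k → Set (Eucl n))
    (xbar : ℝ → Eucl n) (hx : ContinuousOn xbar (Icc S T))
    (hBV : eta F xbar A S T < ⊤)
    (δbar : ℝ) (hδbar : 0 < δbar) (hfin : etaD F xbar A S δbar T < ⊤)
    (hC1 : HypC1 F xbar A S T δbar)
    (γ : ℝ → ℝ) (hC2 : HypC2 F xbar A S T δbar γ)
    (δ : ℝ) (hδ : 0 < δ) (hδδ : δ < δbar)
    (Fp Fm : Eucl n → Eucl k → Set (Eucl n))
    (hFp : ∀ x ∈ closedBall (xbar S) δ, ∀ a ∈ A,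
      Tendsto (fun s => EMetric.hausdorffEdist (F s x a) (Fp x a)) (𝓝[Ioc S T] S) (𝓝 0))
    (hFm : ∀ x ∈ closedBall (xbar T) δ, ∀ a ∈ A,
      Tendsto (fun t => EMetric.hausdorffEdist (F t x a) (Fm x a)) (𝓝[Ico S T] T) (𝓝 0)) :
    ∀ s t : ℝ, S < s → s ≤ t → t < T →
      eta (endpointMod S T δ xbar F Fp Fm) xbar A S t
          - eta (endpointMod S T δ xbar F Fp Fm) xbar A S s
        = eta F xbar A S t - eta F xbar A S s :=
  stmt7_general S T hST A F xbar hx hBV δbar hC1 δ hδδ Fp Fm hFp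
end

section
/- Assume F has bounded variation along x̄ uniformly over A with cumulative variation function η and δ-perturbed functions η^δ_ε, and that hypotheses (C1) and (C2) hold. For each i, let 𝒯_i = {t₀^i = S < t₁^i < … < t_{N_i}^i = T} be a partition of [S,T], let m₀^i be given vectors and {d_j^i}_{j=1}^{N_i−1} given coefficients, and define the piecewise constant function m_i(t) := m₀^i + Σ_{j=1}^{N_i−2} d_j^i 𝟙_{[t_j^i, t_{j+1}^i)}(t) + d_{N_i−1}^i 𝟙_{[t_{N_i−1}^i, T]}(t). Assume: (A1) diam 𝒯_i → 0 as i → ∞; (A2) the sequence {m₀^i} is bounded; (A3) there exists a function (ε,δ) ↦ I(ε,δ) of positive values into the integers such that, for every ε > 0 and δ > 0, |d_j^i| ≤ η^δ_ε(t_j^i) − η^δ_ε(t_{j−1}^i) for all j ∈ {1,…,N_i} and all i ≥ I(ε,δ). Then there exist a function of bounded variation m : [S,T] → ℝ^n which is right continuous on (S,T), and a countable set 𝒜 ⊂ (S,T), such that along some subsequence m_i(t) → m(t) for all t ∈ [S,T] \ 𝒜, and |m(t) − m(s)| ≤ η*(t) − η*(s) for all [s,t] ⊂ [S,T], where η* is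 the normalized cumulative variation: η*(t) := η(t) for t ∈ {S,T} and η*(t) := lim_{s↓t} η(s) for t ∈ (S,T). -/
open Set Metric Filter MeasureTheory
open scoped ENNReal Topology Classical

noncomputable section

/-- The piecewise-constant function
`m(t) = m₀ + Σ_{j=1}^{N-2} d_j 𝟙_{[τ_j, τ_{j+1})}(t) + d_{N-1} 𝟙_{[τ_{N-1}, T]}(t)`. -/
def stepFun {n : ℕ} (T : ℝ) (N : ℕ) (τ : ℕ → ℝ) (m0 : Eucl n) (d : ℕ → Eucl n)
    (t : ℝ) : Eucl n :=
  m0 + (∑ j ∈ Finset.Icc 1 (N - 2), Set.indicator (Set.Ico (τ j) (τ (j + 1))) (fun _ => d j) t)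
     + Set.indicator (Set.Icc (τ (N - 1)) T) (fun _ => d (N - 1)) t

end

noncomputable section

/-- The normalized cumulative variation function: `η*(t) = η(t)` at the endpoints and
`η*(t) = lim_{s ↓ t} η(s)` (the right limit, i.e. the infimum over `s ∈ (t,T]`) for
`t ∈ (S,T)`. -/
def etaStar {n k : ℕ} (F : ℝ → Eucl n → Eucl k → Set (Eucl n)) (xbar : ℝ → Eucl n)
    (A : Set (Eucl k)) (S T t : ℝ) : ℝ≥0∞ :=
  if t = S ∨ t = T then eta F xbar A S t else ⨅ s ∈ Ioc t T, eta F xbar A S s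

end

/-!
For fixed `δ, ε > 0` the values `d_j` taken by `m_i` are bounded by the increments of the
monotone function `η^δ_ε` over the cells of `𝒯_i`. Since these cells do not overlap, once the
mesh is small, `|m_i t - m_i s| + η^δ_ε s' ≤ η^δ_ε t` whenever `s' < s ≤ t`. Fix one level with
`η^δ_ε T < ∞`: a diagonal argument gives a subsequence converging on a countable dense set, the
right limits along that set define `m`, and the control by `η^δ_ε` makes the subsequence converge
to `m` at every continuity point of `η^δ_ε`. Passing to the limit in the increment bound for
every `δ, ε` and taking infima gives the bound by `η*`, which also bounds the variation of `m`.
-/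

namespace IsPartition

variable {a b h : ℝ} {N : ℕ} {τ : ℕ → ℝ}

theorem strictMonoOn (hp : IsPartition a b N τ) : StrictMonoOn τ (Iic N) :=
  strictMonoOn_Iic_of_lt_succ fun j hj => hp.2.2.2 j hj

theorem apply_le_apply (hp : IsPartition a b N τ) {i j : ℕ} (hij : i ≤ j) (hj : j ≤ N) :
    τ i ≤ τ j :=
  hp.strictMonoOn.monotoneOn (mem_Iic.2 (hij.trans hj)) (mem_Iic.2 hj) hij

theorem left_lt_right (hp : IsPartition a b N τ) : a < b := by
  simpa only [hp.2.1, hp.2.2.1] using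
    hp.strictMonoOn (mem_Iic.2 (Nat.zero_le _)) (mem_Iic.2 le_rfl) hp.1

theorem two_le_of_meshLE (hp : IsPartition a b N τ) (hm : MeshLE N τ h) (hh : h < b - a) :
    2 ≤ N := by
  by_contra! hN
  have hb := hp.2.2.1
  rw [show N = 1 by have := hp.1; omega] at hb
  have := hm 0 hp.1
  rw [zero_add, hb, hp.2.1] at this
  linarith

theorem exists_extend (hp : IsPartition a b N τ) (hm : MeshLE N τ h) (hh : 0 < h) {c : ℝ}
    (hbc : b < c) :
    ∃ M τ', IsPartition a c (N + M) τ' ∧ MeshLE (N + M) τ' h ∧ ∀ j ≤ N, τ' j = τ j := by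
  set M := ⌈(c - b) / h⌉₊
  have hM : (0 : ℝ) < M := by simpa [M] using div_pos (sub_pos.2 hbc) hh
  set step := (c - b) / M
  have hstep : 0 < step := div_pos (sub_pos.2 hbc) hM
  have hstep_le : step ≤ h := by
    rw [div_le_iff₀ hM, ← div_le_iff₀' hh]
    exact Nat.le_ceil _
  set τ' : ℕ → ℝ := fun j => if j ≤ N then τ j else b + (j - N) * step
  have hτ' : ∀ j ≥ N, τ' j = b + (j - N) * step := by
    intro j hj
    rcases hj.eq_or_lt with rfl | hj
    · simp [τ', hp.2.2.1]
    · simp [τ', not_le.2 hj]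
  have hsucc : ∀ j ≥ N, τ' (j + 1) = τ' j + step := by
    intro j hj
    rw [hτ' j hj, hτ' (j + 1) (by omega)]
    push_cast
    ring
  have hlow : ∀ j < N, τ' j = τ j ∧ τ' (j + 1) = τ (j + 1) := fun j hj =>
    ⟨if_pos hj.le, if_pos hj⟩
  refine ⟨M, τ', ⟨by have := hp.1; omega, by simp [τ', hp.2.1], ?_, fun j hj => ?_⟩,
    fun j hj => ?_, fun j hj => if_pos hj⟩
  · rw [hτ' _ (by omega)]
    push_cast
    rw [add_sub_cancel_left, mul_div_cancel₀ _ hM.ne']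
    ring
  · rcases lt_or_ge j N with hjN | hjN
    · rw [(hlow j hjN).1, (hlow j hjN).2]
      exact hp.2.2.2 j hjN
    · rw [hsucc j hjN]
      linarith
  · rcases lt_or_ge j N with hjN | hjN
    · rw [(hlow j hjN).1, (hlow j hjN).2]
      exact hm j hjN
    · rw [hsucc j hjN]
      linarith

end IsPartition

section CumulativeVariation

variable {n k : ℕ} {F : ℝ → Eucl n → Eucl k → Set (Eucl n)} {xbar : ℝ → Eucl n}
  {A : Set (Eucl k)} {S δ ε t : ℝ}

theorem etaE_of_le (ht : t ≤ S) : etaE F xbar A S δ ε t = 0 :=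
  le_antisymm (iSup_le fun _ => iSup_le fun _ => iSup_le fun hp =>
    absurd hp.left_lt_right (not_lt.2 ht)) bot_le

theorem variSum_le_of_eqOn {N N' : ℕ} {τ τ' : ℕ → ℝ} (hN : N ≤ N') (hτ : ∀ j ≤ N, τ' j = τ j) :
    variSum F xbar A δ N τ ≤ variSum F xbar A δ N' τ' := by
  unfold variSum
  calc _ = ∑ i ∈ Finset.range N, ⨆ x ∈ tube xbar (τ' i) (τ' (i + 1)) δ, ⨆ a ∈ A,
        EMetric.hausdorffEdist (F (τ' (i + 1)) x a) (F (τ' i) x a) :=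
        Finset.sum_congr rfl fun i hi => by
          rw [hτ i (Finset.mem_range.1 hi).le, hτ (i + 1) (Finset.mem_range.1 hi)]
    _ ≤ _ := Finset.sum_le_sum_of_subset (Finset.range_subset_range.2 hN)

theorem etaE_mono (hε : 0 < ε) : Monotone (etaE F xbar A S δ ε) := by
  intro t₁ t₂ h
  rcases h.eq_or_lt with rfl | h
  · rfl
  refine iSup_le fun N => iSup_le fun τ => iSup_le fun hp => iSup_le fun hm => ?_
  obtain ⟨M, τ', hp', hm', hτ'⟩ := hp.exists_extend hm hε h
  exact (variSum_le_of_eqOn (N.le_add_right M) hτ').trans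
    (le_iSup_of_le (N + M) (le_iSup_of_le τ' (le_iSup₂_of_le hp' hm' le_rfl)))

theorem exists_etaE_lt_top (h : eta F xbar A S t < ⊤) :
    ∃ δ ε, 0 < δ ∧ 0 < ε ∧ etaE F xbar A S δ ε t < ⊤ := by
  simp only [eta, etaD, iInf_lt_iff] at h
  obtain ⟨δ, hδ, ε, hε, h⟩ := h
  exact ⟨δ, ε, hδ, hε, h⟩

end CumulativeVariation

section StepFunction

variable {n : ℕ} {S T h s t : ℝ} {N : ℕ} {τ : ℕ → ℝ} {m0 : Eucl n} {d : ℕ → Eucl n}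

noncomputable def jumpIndex (N : ℕ) (τ : ℕ → ℝ) (t : ℝ) : ℕ :=
  Nat.findGreatest (fun j => τ j ≤ t) (N - 1)

theorem jumpIndex_le : jumpIndex N τ t ≤ N - 1 := Nat.findGreatest_le _

theorem tau_jumpIndex_le (hp : IsPartition S T N τ) (ht : S ≤ t) : τ (jumpIndex N τ t) ≤ t :=
  Nat.findGreatest_spec (P := fun j => τ j ≤ t) (Nat.zero_le _) (hp.2.1 ▸ ht)

theorem lt_tau_of_jumpIndex_lt {j : ℕ} (hj : jumpIndex N τ t < j) (hjN : j ≤ N - 1) : t < τ j :=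
  not_le.1 (Nat.findGreatest_is_greatest hj hjN)

theorem jumpIndex_mono (hp : IsPartition S T N τ) (hs : S ≤ s) (hst : s ≤ t) :
    jumpIndex N τ s ≤ jumpIndex N τ t :=
  Nat.le_findGreatest jumpIndex_le ((tau_jumpIndex_le hp hs).trans hst)

theorem jumpIndex_eq_iff (hp : IsPartition S T N τ) (ht : S ≤ t) {j : ℕ} (hj : j + 1 ≤ N - 1) :
    jumpIndex N τ t = j ↔ t ∈ Ico (τ j) (τ (j + 1)) := by
  constructor
  · rintro rfl
    exact ⟨tau_jumpIndex_le hp ht, lt_tau_of_jumpIndex_lt (Nat.lt_succ_self _) hj⟩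
  · rintro ⟨hjt, htj⟩
    refine le_antisymm (not_lt.1 fun hlt => htj.not_ge ?_) (Nat.le_findGreatest (by omega) hjt)
    exact (hp.apply_le_apply hlt (jumpIndex_le.trans (by omega))).trans (tau_jumpIndex_le hp ht)

theorem jumpIndex_eq_last_iff (hp : IsPartition S T N τ) (ht : S ≤ t) :
    jumpIndex N τ t = N - 1 ↔ τ (N - 1) ≤ t :=
  ⟨fun h => h ▸ tau_jumpIndex_le hp ht,
    fun h => le_antisymm jumpIndex_le (Nat.le_findGreatest le_rfl h)⟩

theorem stepFun_eq (hp : IsPartition S T N τ) (hN : 2 ≤ N) (ht : t ∈ Icc S T) :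
    stepFun T N τ m0 d t = m0 + if jumpIndex N τ t = 0 then 0 else d (jumpIndex N τ t) := by
  set J := jumpIndex N τ t
  have hsum : ∑ j ∈ Finset.Icc 1 (N - 2), indicator (Ico (τ j) (τ (j + 1))) (fun _ => d j) t
      = ∑ j ∈ Finset.Icc 1 (N - 2), if J = j then d j else 0 := by
    refine Finset.sum_congr rfl fun j hj => ?_
    rw [Finset.mem_Icc] at hj
    simp only [indicator_apply, ← jumpIndex_eq_iff hp ht.1 (show j + 1 ≤ N - 1 by omega), J]
  have hlast : indicator (Icc (τ (N - 1)) T) (fun _ => d (N - 1)) t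
      = if J = N - 1 then d (N - 1) else 0 := by
    simp only [indicator_apply, mem_Icc, ht.2, and_true, ← jumpIndex_eq_last_iff hp ht.1, J]
  have hJ : J ≤ N - 1 := jumpIndex_le
  rw [stepFun, hsum, hlast, Finset.sum_ite_eq]
  split_ifs <;> simp_all <;> omega

theorem stepFun_left (hp : IsPartition S T N τ) (hN : 2 ≤ N) :
    stepFun T N τ m0 d S = m0 := by
  have hJ : jumpIndex N τ S = 0 := (jumpIndex_eq_iff hp le_rfl (by omega)).2
    ⟨hp.2.1.le, hp.2.1 ▸ hp.2.2.2 0 (by omega)⟩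
  rw [stepFun_eq hp hN ⟨le_rfl, hp.left_lt_right.le⟩, if_pos hJ, add_zero]

/-- The two values `d J` of an increment are bounded by the increments of `g` over the cells
`[τ (J - 1), τ J]`, which do not overlap; with truncated subtraction `τ (0 - 1) = τ 0`, so the
first cell, where the value is `0`, needs no special case. -/
theorem ofReal_norm_stepFun_sub_add_le {g : ℝ → ℝ≥0∞} (hp : IsPartition S T N τ) (hN : 2 ≤ N)
    (hg : Monotone g)
    (hd : ∀ j, 1 ≤ j → j ≤ N - 1 → ENNReal.ofReal ‖d j‖ ≤ g (τ j) - g (τ (j - 1)))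
    (hs : S ≤ s) (hst : s ≤ t) (ht : t ≤ T) {s' : ℝ} (hs' : s' ≤ τ (jumpIndex N τ s - 1)) :
    ENNReal.ofReal ‖stepFun T N τ m0 d t - stepFun T N τ m0 d s‖ + g s' ≤ g t := by
  set e : ℕ → Eucl n := fun j => if j = 0 then 0 else d j
  have he : ∀ j ≤ N - 1, ENNReal.ofReal ‖e j‖ + g (τ (j - 1)) ≤ g (τ j) := by
    intro j hj
    rcases Nat.eq_zero_or_pos j with rfl | hj0
    · simp [e]
    simp only [e, if_neg hj0.ne']
    exact add_le_of_le_tsub_right_of_le (hg (hp.apply_le_apply (Nat.sub_le _ _) (by omega)))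
      (hd j hj0 hj)
  rw [stepFun_eq hp hN ⟨hs.trans hst, ht⟩, stepFun_eq hp hN ⟨hs, hst.trans ht⟩,
    add_sub_add_left_eq_sub]
  set Js := jumpIndex N τ s
  set Jt := jumpIndex N τ t
  change ENNReal.ofReal ‖e Jt - e Js‖ + g s' ≤ g t
  have hJs : Js ≤ N - 1 := jumpIndex_le
  have hJt : Jt ≤ N - 1 := jumpIndex_le
  have hgs' : g s' ≤ g (τ (Js - 1)) := hg hs'
  rcases (jumpIndex_mono hp hs hst : Js ≤ Jt).eq_or_lt with hJ | hJ
  · rw [show Js = Jt from hJ, sub_self, norm_zero, ENNReal.ofReal_zero, zero_add]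
    exact hgs'.trans (hg ((hp.apply_le_apply (Nat.sub_le _ _) (by omega)).trans
      ((tau_jumpIndex_le hp (hs.trans hst)).trans' (hp.apply_le_apply hJ.le (by omega)))))
  calc ENNReal.ofReal ‖e Jt - e Js‖ + g s'
      ≤ ENNReal.ofReal ‖e Jt‖ + (ENNReal.ofReal ‖e Js‖ + g (τ (Js - 1))) := by
        rw [← add_assoc, ← ENNReal.ofReal_add (norm_nonneg _) (norm_nonneg _)]
        gcongr
        exact norm_sub_le _ _
    _ ≤ ENNReal.ofReal ‖e Jt‖ + g (τ (Jt - 1)) := by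
        gcongr
        exact (he Js hJs).trans (hg (hp.apply_le_apply (by omega) (by omega)))
    _ ≤ g (τ Jt) := he Jt hJt
    _ ≤ g t := hg (tau_jumpIndex_le hp (hs.trans hst))

theorem sub_two_mul_le_tau_jumpIndex_pred (hp : IsPartition S T N τ) (hm : MeshLE N τ h)
    (hsT : s ≤ T) : s - 2 * h ≤ τ (jumpIndex N τ s - 1) := by
  set J := jumpIndex N τ s
  have hJ : J ≤ N - 1 := jumpIndex_le
  have hh : 0 ≤ h := (sub_nonneg.2 (hp.2.2.2 0 hp.1).le).trans (hm 0 hp.1)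
  have hN := hp.1
  have h1 : s ≤ τ (J + 1) := by
    rcases (show J + 1 ≤ N by omega).eq_or_lt with hJN | hJN
    · rw [hJN, hp.2.2.1]
      exact hsT
    · exact (lt_tau_of_jumpIndex_lt (Nat.lt_succ_self J) (by omega)).le
  have h2 : τ (J + 1) ≤ τ J + h := by linarith [hm J (by omega)]
  have h3 : τ J ≤ τ (J - 1) + h := by
    rcases Nat.eq_zero_or_pos J with hJ0 | hJ0
    · rw [hJ0]
      linarith
    · have := hm (J - 1) (by omega)
      rw [Nat.sub_add_cancel hJ0] at this
      linarith
  linarith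

end StepFunction

theorem exists_strictMono_forall_tendsto {α E : Type*} [MetricSpace E] {D : Set α}
    (hD : D.Countable) {K : α → Set E} (hK : ∀ q, IsCompact (K q)) {f : ℕ → α → E}
    (hf : ∀ q ∈ D, ∀ᶠ i in atTop, f i q ∈ K q) :
    ∃ φ : ℕ → ℕ, StrictMono φ ∧ ∃ L : α → E, ∀ q ∈ D,
      Tendsto (fun j => f (φ j) q) atTop (𝓝 (L q)) := by
  choose! i₀ hi₀ using fun q hq => eventually_atTop.1 (hf q hq)
  have : Countable D := hD.to_subtype
  have hK' : ∀ q : D, IsCompact (K q ∪ (f · q) '' Iio (i₀ q)) := fun q =>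
    (hK q).union ((finite_Iio _).image _).isCompact
  have hmem : ∀ i, (fun q : D => f i q) ∈ univ.pi fun q : D => K q ∪ (f · q) '' Iio (i₀ q) :=
    fun i => mem_univ_pi.2 fun q => by
      by_cases hi : i < i₀ q
      · exact Or.inr ⟨i, hi, rfl⟩
      · exact Or.inl (hi₀ q q.2 i (not_lt.1 hi))
  obtain ⟨L, -, φ, hφ, hlim⟩ := (isCompact_univ_pi hK').tendsto_subseq hmem
  refine ⟨φ, hφ, fun q => if h : q ∈ D then L ⟨q, h⟩ else f 0 q, fun q hq => ?_⟩
  simpa [hq] using tendsto_pi_nhds.1 hlim ⟨q, hq⟩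

theorem eventually_nhdsGT_inf_principal_iff {D : Set ℝ} {t : ℝ} {p : ℝ → Prop} :
    (∀ᶠ q in 𝓝[>] t ⊓ 𝓟 D, p q) ↔ ∃ u > t, ∀ q ∈ D, q ∈ Ioo t u → p q := by
  rw [eventually_inf_principal]
  exact mem_nhdsGT_iff_exists_Ioo_subset.trans
    (exists_congr fun u => and_congr_right fun _ => ⟨fun h q hq hqu => h hqu hq,
      fun h q hqu hq => h q hq hqu⟩)

section RightLimits

variable {E : Type*} [MetricSpace E] {D : Set ℝ} {L : ℝ → E} {G : ℝ → ℝ} {t : ℝ}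

/-- Cauchy criterion: `G` has a right limit at `t`, so its increments near `t` are small. -/
theorem exists_tendsto_nhdsGT_inf_principal [CompleteSpace E] [(𝓝[>] t ⊓ 𝓟 D).NeBot]
    (hG : Monotone G)
    (hL : ∀ s' x y, t < s' → s' < x → x ≤ y → x ∈ D → y ∈ D → dist (L y) (L x) ≤ G y - G s') :
    ∃ z, Tendsto L (𝓝[>] t ⊓ 𝓟 D) (𝓝 z) := by
  refine cauchy_map_iff_exists_tendsto.1 (Metric.cauchy_iff.2 ⟨inferInstance, fun ε hε => ?_⟩)
  obtain ⟨u, hu, hGu⟩ := mem_nhdsGT_iff_exists_Ioo_subset.1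
    ((Metric.tendsto_nhds.1 (hG.tendsto_nhdsGT t)) (ε / 2) (half_pos hε))
  have hosc : ∀ x y, x ∈ D ∩ Ioo t u → y ∈ D ∩ Ioo t u → x ≤ y → dist (L y) (L x) < ε := by
    rintro x y ⟨hxD, hx⟩ ⟨hyD, hy⟩ hxy
    have h₁ := hGu hy
    have h₂ := hGu (show (t + x) / 2 ∈ Ioo t u by constructor <;> linarith [hx.1, hx.2])
    simp only [Set.mem_ofPred_eq, Real.dist_eq, abs_lt] at h₁ h₂
    linarith [hL ((t + x) / 2) x y (by linarith [hx.1]) (by linarith [hx.1]) hxy hxD hyD]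
  refine ⟨L '' (D ∩ Ioo t u), image_mem_map ?_, ?_⟩
  · exact inter_mem (mem_inf_of_right (mem_principal_self D))
      (mem_inf_of_left (Ioo_mem_nhdsGT hu))
  · rintro _ ⟨x, hx, rfl⟩ _ ⟨y, hy, rfl⟩
    rcases le_total x y with hxy | hxy
    · rw [dist_comm]
      exact hosc x y hx hy hxy
    · exact hosc y x hy hx hxy

theorem continuousWithinAt_Ici_of_tendsto {R : ℝ → E} {u : ℝ} (htu : t < u)
    (hR : ∀ v ∈ Ico t u, (𝓝[>] v ⊓ 𝓟 D).NeBot ∧ Tendsto L (𝓝[>] v ⊓ 𝓟 D) (𝓝 (R v))) :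
    ContinuousWithinAt R (Ici t) t := by
  refine Metric.continuousWithinAt_iff.2 fun ε hε => ?_
  obtain ⟨u', hu', hL⟩ := eventually_nhdsGT_inf_principal_iff.1
    (Metric.tendsto_nhds.1 (hR t ⟨le_rfl, htu⟩).2 (ε / 2) (half_pos hε))
  refine ⟨min u u' - t, sub_pos.2 (lt_min htu hu'), fun v hv hvt => ?_⟩
  rw [Real.dist_eq, abs_of_nonneg (sub_nonneg.2 hv)] at hvt
  rcases (mem_Ici.1 hv).eq_or_lt with rfl | hv
  · simpa using hε
  have hvu : v < u := by linarith [min_le_left u u']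
  obtain ⟨hne, hlim⟩ := hR v ⟨hv.le, hvu⟩
  refine (le_of_tendsto (hlim.dist tendsto_const_nhds) ?_).trans_lt (half_lt_self hε)
  filter_upwards [eventually_nhdsGT_inf_principal_iff.2 ⟨min u u', by linarith, fun q hq hqv =>
    hL q hq ⟨hv.trans hqv.1, hqv.2.trans_le (min_le_right _ _)⟩⟩] with q hq
  exact hq.le

end RightLimits

theorem neBot_nhdsGT_inf_principal_of_rat {S T t : ℝ} {D : Set ℝ}
    (hD : Icc S T ∩ range ((↑) : ℚ → ℝ) ⊆ D) (ht : t ∈ Ico S T) : (𝓝[>] t ⊓ 𝓟 D).NeBot := by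
  refine (frequently_true_iff_neBot _).1 fun h => ?_
  obtain ⟨u, hu, hDu⟩ := eventually_nhdsGT_inf_principal_iff.1 h
  obtain ⟨q, hq₁, hq₂⟩ := exists_rat_btwn (lt_min hu ht.2)
  exact hDu q (hD ⟨⟨by linarith [ht.1], (hq₂.trans_le (min_le_right _ _)).le⟩, q, rfl⟩)
    ⟨hq₁, hq₂.trans_le (min_le_left _ _)⟩ trivial

section Selection

variable {E : Type*} [MetricSpace E] {f : ℕ → ℝ → E} {G : ℝ → ℝ} {S T : ℝ}

theorem eventually_mem_closedBall (hG : Monotone G) {x₀ : E} {R : ℝ}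
    (hR : ∀ᶠ i in atTop, dist (f i S) x₀ ≤ R)
    (hf : ∀ ⦃s' s t⦄, s' < s → S ≤ s → s ≤ t → t ≤ T →
      ∀ᶠ i in atTop, dist (f i t) (f i s) ≤ G t - G s')
    {t : ℝ} (ht : t ∈ Icc S T) : ∀ᶠ i in atTop, f i t ∈ closedBall x₀ (R + (G T - G (S - 1))) := by
  filter_upwards [hR, hf (show S - 1 < S by linarith) le_rfl ht.1 ht.2] with i hi hi'
  rw [mem_closedBall]
  linarith [dist_triangle (f i t) (f i S) x₀, hG ht.2]

theorem tendsto_of_continuousAt_of_dist_le {D : Set ℝ} {L : ℝ → E} {t : ℝ} {z : E}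
    (hf : ∀ ⦃s' s t⦄, s' < s → S ≤ s → s ≤ t → t ≤ T →
      ∀ᶠ i in atTop, dist (f i t) (f i s) ≤ G t - G s')
    (hD : D ⊆ Icc S T) (hL : ∀ q ∈ D, Tendsto (fun i => f i q) atTop (𝓝 (L q)))
    (ht : S ≤ t) (hGt : ContinuousAt G t) [(𝓝[>] t ⊓ 𝓟 D).NeBot]
    (hz : Tendsto L (𝓝[>] t ⊓ 𝓟 D) (𝓝 z)) :
    Tendsto (fun i => f i t) atTop (𝓝 z) := by
  refine Metric.tendsto_nhds.2 fun ε hε => ?_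
  obtain ⟨η, hη, hGη⟩ := Metric.continuousAt_iff.1 hGt (ε / 4) (by positivity)
  obtain ⟨q, hqz, hqD, hq⟩ := ((Metric.tendsto_nhds.1 hz (ε / 4) (by positivity)).and
    (eventually_nhdsGT_inf_principal_iff (p := fun q => q ∈ D ∧ q ∈ Ioo t (t + η)).2
      ⟨t + η, by linarith, fun q hq hqt => ⟨hq, hqt⟩⟩)).exists
  have hGq := hGη (show dist q t < η by
    rw [Real.dist_eq, abs_lt]; constructor <;> linarith [hq.1, hq.2])
  have hGs := hGη (show dist (t - η / 2) t < η by
    rw [Real.dist_eq, abs_lt]; constructor <;> linarith)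
  rw [Real.dist_eq, abs_lt] at hGq hGs
  filter_upwards [hf (show t - η / 2 < t by linarith) ht hq.1.le (hD hqD).2,
    Metric.tendsto_nhds.1 (hL q hqD) (ε / 4) (by positivity)] with i hi hi'
  calc dist (f i t) z ≤ dist (f i t) (f i q) + dist (f i q) (L q) + dist (L q) z :=
        dist_triangle4 _ _ _ _
    _ < ε := by rw [dist_comm] at hi; linarith

theorem exists_subseq_tendsto_of_dist_le [ProperSpace E] (hST : S ≤ T) (hG : Monotone G)
    (hS : ∃ x R, ∀ᶠ i in atTop, dist (f i S) x ≤ R)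
    (hf : ∀ ⦃s' s t⦄, s' < s → S ≤ s → s ≤ t → t ≤ T →
      ∀ᶠ i in atTop, dist (f i t) (f i s) ≤ G t - G s') :
    ∃ (m : ℝ → E) (𝒜 : Set ℝ) (φ : ℕ → ℕ), StrictMono φ ∧ 𝒜.Countable ∧ 𝒜 ⊆ Ioo S T ∧
      (∀ t ∈ Icc S T \ 𝒜, Tendsto (fun j => f (φ j) t) atTop (𝓝 (m t))) ∧
      ∀ t ∈ Ioo S T, ContinuousWithinAt m (Ici t) t := by
  obtain ⟨x₀, R, hR⟩ := hS
  have : Nonempty E := ⟨x₀⟩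
  set D : Set ℝ := insert S (insert T (Icc S T ∩ range ((↑) : ℚ → ℝ)))
  have hDsub : D ⊆ Icc S T := insert_subset ⟨le_rfl, hST⟩ (insert_subset ⟨hST, le_rfl⟩
    inter_subset_left)
  have hne : ∀ t ∈ Ico S T, (𝓝[>] t ⊓ 𝓟 D).NeBot := fun t ht =>
    neBot_nhdsGT_inf_principal_of_rat (subset_insert _ _ |>.trans (subset_insert _ _)) ht
  obtain ⟨φ, hφ, L, hL⟩ := exists_strictMono_forall_tendsto
    (((countable_range _).mono inter_subset_right).insert _ |>.insert _)
    (fun _ => isCompact_closedBall _ _) fun q hq => eventually_mem_closedBall hG hR hf (hDsub hq)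
  have hfφ : ∀ ⦃s' s t⦄, s' < s → S ≤ s → s ≤ t → t ≤ T →
      ∀ᶠ j in atTop, dist (f (φ j) t) (f (φ j) s) ≤ G t - G s' :=
    fun _ _ _ h₁ h₂ h₃ h₄ => hφ.tendsto_atTop.eventually (hf h₁ h₂ h₃ h₄)
  have hLD : ∀ s' x y, s' < x → S ≤ x → x ≤ y → y ≤ T → x ∈ D → y ∈ D →
      dist (L y) (L x) ≤ G y - G s' := fun s' x y h₁ h₂ h₃ h₄ hx hy =>
    le_of_tendsto ((hL y hy).dist (hL x hx)) (hfφ h₁ h₂ h₃ h₄)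
  have hRL : ∀ t ∈ Ico S T, Tendsto L (𝓝[>] t ⊓ 𝓟 D) (𝓝 (limUnder (𝓝[>] t ⊓ 𝓟 D) L)) :=
    fun t ht => have := hne t ht
      tendsto_nhds_limUnder (exists_tendsto_nhdsGT_inf_principal hG fun s' x y h₁ h₂ h₃ hx hy =>
        hLD s' x y h₂ (hDsub hx).1 h₃ (hDsub hy).2 hx hy)
  set m : ℝ → E := fun t => if t ∈ Ioo S T then limUnder (𝓝[>] t ⊓ 𝓟 D) L else L t
  refine ⟨m, {t ∈ Ioo S T | ¬ContinuousAt G t}, φ, hφ,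
    hG.countable_not_continuousAt.mono fun _ ht => ht.2, sep_subset _ _, ?_, fun t ht => ?_⟩
  · rintro t ⟨ht, ht𝒜⟩
    by_cases hti : t ∈ Ioo S T
    · have := hne t ⟨ht.1, hti.2⟩
      simp only [m, if_pos hti]
      exact tendsto_of_continuousAt_of_dist_le hfφ hDsub hL ht.1 (not_not.1 fun h => ht𝒜 ⟨hti, h⟩)
        (hRL t ⟨ht.1, hti.2⟩)
    · have htD : t ∈ D := by
        obtain rfl | rfl : t = S ∨ t = T := by
          by_contra! h
          exact hti ⟨ht.1.lt_of_ne h.1.symm, ht.2.lt_of_ne h.2⟩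
        exacts [mem_insert _ _, mem_insert_of_mem _ (mem_insert _ _)]
      simp only [m, if_neg hti]
      exact hL t htD
  · refine continuousWithinAt_Ici_of_tendsto (L := L) ht.2 fun v hv =>
      ⟨hne v ⟨ht.1.le.trans hv.1, hv.2⟩, ?_⟩
    simp only [m, if_pos (show v ∈ Ioo S T from ⟨ht.1.trans_le hv.1, hv.2⟩)]
    exact hRL v ⟨ht.1.le.trans hv.1, hv.2⟩

end Selection

theorem Set.Countable.mem_closure_Ioo_diff {𝒜 : Set ℝ} (h𝒜 : 𝒜.Countable) {x y : ℝ}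
    (hxy : x < y) : x ∈ closure (Ioo x y \ 𝒜) := by
  have hsub := closure_minimal ((h𝒜.dense_compl ℝ).open_subset_closure_inter
    (isOpen_Ioo (a := x) (b := y))) isClosed_closure
  rw [closure_Ioo hxy.ne] at hsub
  exact hsub (left_mem_Icc.2 hxy.le)

theorem ContinuousWithinAt.le_of_forall_Ioo_diff {α β : Type*} [TopologicalSpace α]
    [TopologicalSpace β] [Preorder β] [OrderClosedTopology β] {m : ℝ → α} {x y : ℝ}
    (hm : ContinuousWithinAt m (Ici x) x) {𝒜 : Set ℝ} (h𝒜 : 𝒜.Countable) (hxy : x < y)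
    {Φ : α → β} (hΦ : Continuous Φ) {K : β} (hK : ∀ c ∈ Ioo x y \ 𝒜, Φ (m c) ≤ K) :
    Φ (m x) ≤ K :=
  closure_minimal (t := {z | Φ z ≤ K}) (image_subset_iff.2 hK) (isClosed_le hΦ continuous_const)
    ((hm.mono fun _ hc => mem_Ici.2 hc.1.1.le).mem_closure_image (h𝒜.mem_closure_Ioo_diff hxy))

/-- The normalization `h ↦ h*` of the paper; for monotone `h` the infimum is the right limit. -/
noncomputable def rightNormalize (h : ℝ → ℝ≥0∞) (S T t : ℝ) : ℝ≥0∞ :=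
  if t = S ∨ t = T then h t else ⨅ s ∈ Ioc t T, h s

theorem rightNormalize_iInf {ι : Sort*} (h : ι → ℝ → ℝ≥0∞) (S T t : ℝ) :
    rightNormalize (fun s => ⨅ i, h i s) S T t = ⨅ i, rightNormalize (h i) S T t := by
  unfold rightNormalize
  split_ifs
  · rfl
  · exact (iInf_congr fun s => iInf_comm).trans iInf_comm

section ControlledIncrements

variable {E : Type*} [MetricSpace E] {f : ℕ → ℝ → E} {g : ℝ → ℝ≥0∞} {S T : ℝ}

def HasControlledIncrements (f : ℕ → ℝ → E) (g : ℝ → ℝ≥0∞) (S T : ℝ) : Prop :=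
  ∀ ⦃s' s t⦄, s' < s → S ≤ s → s ≤ t → t ≤ T →
    ∀ᶠ i in atTop, edist (f i t) (f i s) + g s' ≤ g t

namespace HasControlledIncrements

theorem comp_tendsto (hf : HasControlledIncrements f g S T) {φ : ℕ → ℕ}
    (hφ : Tendsto φ atTop atTop) : HasControlledIncrements (fun j => f (φ j)) g S T :=
  fun _ _ _ h₁ h₂ h₃ h₄ => hφ.eventually (hf h₁ h₂ h₃ h₄)

theorem exists_subseq_tendsto [ProperSpace E] (hf : HasControlledIncrements f g S T)
    (hST : S ≤ T) (hg : Monotone g) (hgT : g T ≠ ⊤)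
    (hS : ∃ x R, ∀ᶠ i in atTop, dist (f i S) x ≤ R) :
    ∃ (m : ℝ → E) (𝒜 : Set ℝ) (φ : ℕ → ℕ), StrictMono φ ∧ 𝒜.Countable ∧ 𝒜 ⊆ Ioo S T ∧
      (∀ t ∈ Icc S T \ 𝒜, Tendsto (fun j => f (φ j) t) atTop (𝓝 (m t))) ∧
      ∀ t ∈ Ioo S T, ContinuousWithinAt m (Ici t) t := by
  have hfin : ∀ t ≤ T, g t ≠ ⊤ := fun t ht => ne_top_of_le_ne_top hgT (hg ht)
  refine exists_subseq_tendsto_of_dist_le hST (G := fun x => (g (min x T)).toReal)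
    (fun a b hab => ENNReal.toReal_mono (hfin _ (min_le_right _ _)) (hg (min_le_min_right T hab)))
    hS fun s' s t h₁ h₂ h₃ h₄ => ?_
  filter_upwards [hf h₁ h₂ h₃ h₄] with i hi
  have := ENNReal.toReal_mono (hfin t h₄) hi
  rw [ENNReal.toReal_add (edist_ne_top _ _)
    (ne_top_of_le_ne_top (hfin t h₄) (le_add_self.trans hi)), ← dist_edist] at this
  simp only [min_eq_left h₄, min_eq_left (h₁.le.trans (h₃.trans h₄))]
  linarith

theorem edist_add_rightNormalize_le (hf : HasControlledIncrements f g S T) (hg : Monotone g)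
    (hgS : g S = 0) {m : ℝ → E} {𝒜 : Set ℝ} (h𝒜 : 𝒜.Countable) (h𝒜S : 𝒜 ⊆ Ioo S T)
    (hm : ∀ t ∈ Icc S T \ 𝒜, Tendsto (fun i => f i t) atTop (𝓝 (m t)))
    (hrc : ∀ t ∈ Ioo S T, ContinuousWithinAt m (Ici t) t) {s t : ℝ} (hs : S ≤ s) (hst : s ≤ t)
    (ht : t ≤ T) : edist (m t) (m s) + rightNormalize g S T s ≤ rightNormalize g S T t := by
  rcases hst.eq_or_lt with rfl | hst
  · rw [edist_self, zero_add]
  have hS𝒜 : ∀ x ∈ Icc S T, x ∉ Ioo S T → x ∉ 𝒜 := fun x _ hx h => hx (h𝒜S h)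
  have hlim : ∀ s' a b, s' < a → a ∈ Icc S T \ 𝒜 → b ∈ Icc S T \ 𝒜 → a ≤ b →
      edist (m b) (m a) + g s' ≤ g b := fun s' a b h₁ ha hb hab =>
    le_of_tendsto (((hm b hb).edist (hm a ha)).add_const _) (hf h₁ ha.1.1 hab hb.1.2)
  set W := rightNormalize g S T s
  have hright : ∀ b ∈ Icc S T \ 𝒜, s < b → edist (m b) (m s) + W ≤ g b := by
    intro b hb hsb
    by_cases hsS : s = S
    · subst hsS
      simp only [W, rightNormalize, true_or, if_true, hgS, add_zero]
      exact le_self_add.trans <| hlim (s - 1) s b (by linarith)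
        ⟨⟨le_rfl, hsb.le.trans hb.1.2⟩, hS𝒜 s ⟨le_rfl, hsb.le.trans hb.1.2⟩ fun h => h.1.false⟩
        hb hsb.le
    have hsI : s ∈ Ioo S T := ⟨hs.lt_of_ne' hsS, hst.trans_le ht⟩
    refine (hrc s hsI).le_of_forall_Ioo_diff h𝒜 hsb (Φ := fun z => edist (m b) z + W)
      ((continuous_const.edist continuous_id).add continuous_const) fun a ha => ?_
    have hW : W ≤ g ((s + a) / 2) := by
      simp only [W, rightNormalize, if_neg (not_or.2 ⟨hsS, (hst.trans_le ht).ne⟩)]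
      exact iInf₂_le _ ⟨by linarith [ha.1.1], by linarith [ha.1.2, hb.1.2]⟩
    exact (add_le_add_right hW _).trans (hlim ((s + a) / 2) a b (by linarith [ha.1.1])
      ⟨⟨hs.trans ha.1.1.le, ha.1.2.le.trans hb.1.2⟩, ha.2⟩ hb ha.1.2.le)
  by_cases htT : t = T
  · subst htT
    simpa [rightNormalize] using hright t ⟨⟨hs.trans hst.le, le_rfl⟩,
      hS𝒜 t ⟨hs.trans hst.le, le_rfl⟩ fun h => h.2.false⟩ hst
  have htI : t ∈ Ioo S T := ⟨hs.trans_lt hst, ht.lt_of_ne htT⟩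
  simp only [rightNormalize, if_neg (show ¬(t = S ∨ t = T) by
    rintro (h | h) <;> linarith [htI.1, htI.2])]
  refine le_iInf₂ fun u hu => (hrc t htI).le_of_forall_Ioo_diff h𝒜 hu.1
    (Φ := fun z => edist z (m s) + W)
    ((continuous_id.edist continuous_const).add continuous_const) fun b hb => ?_
  exact (hright b ⟨⟨htI.1.le.trans hb.1.1.le, hb.1.2.le.trans hu.2⟩, hb.2⟩
    (hst.trans hb.1.1)).trans (hg (hb.1.2.le))

end HasControlledIncrements

end ControlledIncrements

theorem eVariationOn_le_of_edist_add_le {α E : Type*} [LinearOrder α] [PseudoEMetricSpace E]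
    {f : α → E} {s : Set α} {φ : α → ℝ≥0∞} {C : ℝ≥0∞}
    (hf : ∀ x ∈ s, ∀ y ∈ s, x ≤ y → edist (f y) (f x) + φ x ≤ φ y) (hC : ∀ x ∈ s, φ x ≤ C) :
    eVariationOn f s ≤ C := by
  refine iSup_le fun ⟨K, u, hu, hus⟩ => ?_
  have htelescope :
      ∀ K, (∑ i ∈ Finset.range K, edist (f (u (i + 1))) (f (u i))) + φ (u 0) ≤ φ (u K) := by
    intro K
    induction K with
    | zero => simp
    | succ K ih =>
      rw [Finset.sum_range_succ, add_right_comm]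
      calc _ ≤ φ (u K) + edist (f (u (K + 1))) (f (u K)) := by gcongr
        _ ≤ φ (u (K + 1)) := by
          rw [add_comm]
          exact hf _ (hus K) _ (hus (K + 1)) (hu K.le_succ)
  exact le_add_right le_rfl |>.trans (htelescope K) |>.trans (hC _ (hus K))

theorem boundedVariationOn_Icc_of_edist_add_le {α E : Type*} [LinearOrder α]
    [PseudoEMetricSpace E] {f : α → E} {φ : α → ℝ≥0∞} {a b : α}
    (hf : ∀ x y, a ≤ x → x ≤ y → y ≤ b → edist (f y) (f x) + φ x ≤ φ y) (hb : φ b ≠ ⊤) :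
    BoundedVariationOn f (Icc a b) :=
  ne_top_of_le_ne_top hb (eVariationOn_le_of_edist_add_le
    (fun x hx y hy hxy => hf x y hx.1 hxy hy.2) fun x hx => le_add_self.trans
      (hf x b hx.1 hx.2 le_rfl))

section StepFunctionSequence

variable {n : ℕ} {S T : ℝ} {N : ℕ → ℕ} {τ : ℕ → ℕ → ℝ} {m0 : ℕ → Eucl n} {d : ℕ → ℕ → Eucl n}

theorem eventually_stepFun_left_eq (hST : S < T) (hpart : ∀ i, IsPartition S T (N i) (τ i))
    (hmesh : ∀ h > 0, ∀ᶠ i in atTop, MeshLE (N i) (τ i) h) :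
    ∀ᶠ i in atTop, stepFun T (N i) (τ i) (m0 i) (d i) S = m0 i :=
  (hmesh ((T - S) / 2) (by linarith)).mono fun i hi =>
    stepFun_left (hpart i) ((hpart i).two_le_of_meshLE hi (by linarith))

theorem hasControlledIncrements_stepFun (hST : S < T) (hpart : ∀ i, IsPartition S T (N i) (τ i))
    (hmesh : ∀ h > 0, ∀ᶠ i in atTop, MeshLE (N i) (τ i) h) {g : ℝ → ℝ≥0∞} (hg : Monotone g)
    (hd : ∀ᶠ i in atTop, ∀ j, 1 ≤ j → j ≤ N i →
      ENNReal.ofReal ‖d i j‖ ≤ g (τ i j) - g (τ i (j - 1))) :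
    HasControlledIncrements (fun i => stepFun T (N i) (τ i) (m0 i) (d i)) g S T := by
  intro s' s t hs's hs hst ht
  set h := min ((s - s') / 2) ((T - S) / 2)
  filter_upwards [hmesh h (lt_min (by linarith) (by linarith)), hd] with i hm hdi
  rw [edist_dist, dist_eq_norm]
  have hN := (hpart i).two_le_of_meshLE hm (by linarith [min_le_right ((s - s') / 2) ((T - S) / 2)])
  refine ofReal_norm_stepFun_sub_add_le (hpart i) hN hg (fun j hj hjN => hdi j hj (by omega))
    hs hst ht ?_
  linarith [sub_two_mul_le_tau_jumpIndex_pred (hpart i) hm (hst.trans ht),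
    min_le_left ((s - s') / 2) ((T - S) / 2)]

end StepFunctionSequence

section NormalizedVariation

variable {n k : ℕ} {F : ℝ → Eucl n → Eucl k → Set (Eucl n)} {xbar : ℝ → Eucl n}
  {A : Set (Eucl k)} {S T : ℝ}

theorem etaStar_eq_iInf (t : ℝ) : etaStar F xbar A S T t =
    ⨅ δ > 0, ⨅ ε > 0, rightNormalize (etaE F xbar A S δ ε) S T t := by
  change rightNormalize (fun s => ⨅ δ > 0, ⨅ ε > 0, etaE F xbar A S δ ε s) S T t = _
  simp only [rightNormalize_iInf]

theorem add_etaStar_le {c : ℝ≥0∞} {s t : ℝ}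
    (h : ∀ δ > 0, ∀ ε > 0, c + rightNormalize (etaE F xbar A S δ ε) S T s ≤
      rightNormalize (etaE F xbar A S δ ε) S T t) :
    c + etaStar F xbar A S T s ≤ etaStar F xbar A S T t := by
  rw [etaStar_eq_iInf, etaStar_eq_iInf]
  refine le_iInf₂ fun δ hδ => le_iInf₂ fun ε hε => le_trans ?_ (h δ hδ ε hε)
  gcongr
  exact iInf₂_le_of_le δ hδ (iInf₂_le ε hε)

end NormalizedVariation

theorem stmt11_general {n k : ℕ} (S T : ℝ) (hST : S < T)
    (A : Set (Eucl k))
    (F : ℝ → Eucl n → Eucl k → Set (Eucl n))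
    (xbar : ℝ → Eucl n)
    (hBV : eta F xbar A S T < ⊤)
    (N : ℕ → ℕ) (τ : ℕ → ℕ → ℝ) (hpart : ∀ i, IsPartition S T (N i) (τ i))
    (m0 : ℕ → Eucl n) (d : ℕ → ℕ → Eucl n)
    (hA1 : ∀ ε > (0 : ℝ), ∃ I0 : ℕ, ∀ i ≥ I0, MeshLE (N i) (τ i) ε)
    (hA2 : ∃ M : ℝ, ∀ i, ‖m0 i‖ ≤ M)
    (I : ℝ → ℝ → ℕ)
    (hA3 : ∀ ε > (0 : ℝ), ∀ δ > (0 : ℝ), ∀ i ≥ I ε δ, ∀ j : ℕ, 1 ≤ j → j ≤ N i →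
      ENNReal.ofReal ‖d i j‖ ≤
        etaE F xbar A S δ ε (τ i j) - etaE F xbar A S δ ε (τ i (j - 1))) :
    ∃ (m : ℝ → Eucl n) (𝒜 : Set ℝ) (φ : ℕ → ℕ),
      BoundedVariationOn m (Icc S T) ∧
      (∀ t ∈ Ioo S T, ContinuousWithinAt m (Ici t) t) ∧
      𝒜.Countable ∧ 𝒜 ⊆ Ioo S T ∧ StrictMono φ ∧
      (∀ t ∈ Icc S T \ 𝒜,
        Tendsto (fun i => stepFun T (N (φ i)) (τ (φ i)) (m0 (φ i)) (d (φ i)) t)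
          atTop (𝓝 (m t))) ∧
      (∀ s t : ℝ, S ≤ s → s ≤ t → t ≤ T →
        ENNReal.ofReal ‖m t - m s‖ ≤
          etaStar F xbar A S T t - etaStar F xbar A S T s) := by
  have hmesh : ∀ h > 0, ∀ᶠ i in atTop, MeshLE (N i) (τ i) h :=
    fun h hh => eventually_atTop.2 (hA1 h hh)
  have hctrl : ∀ δ > 0, ∀ ε > 0, HasControlledIncrements
      (fun i => stepFun T (N i) (τ i) (m0 i) (d i)) (etaE F xbar A S δ ε) S T :=
    fun δ hδ ε hε => hasControlledIncrements_stepFun hST hpart hmesh (etaE_mono hε)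
      (eventually_atTop.2 ⟨I ε δ, hA3 ε hε δ hδ⟩)
  obtain ⟨M, hM⟩ := hA2
  obtain ⟨δ₀, ε₀, hδ₀, hε₀, hfin⟩ := exists_etaE_lt_top hBV
  obtain ⟨m, 𝒜, φ, hφ, h𝒜, h𝒜S, hconv, hrc⟩ :=
    (hctrl δ₀ hδ₀ ε₀ hε₀).exists_subseq_tendsto hST.le (etaE_mono hε₀) hfin.ne
      ⟨0, M, (eventually_stepFun_left_eq hST hpart hmesh).mono fun i hi => by
        rw [dist_zero_right, hi]; exact hM i⟩
  have hest : ∀ s t, S ≤ s → s ≤ t → t ≤ T →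
      edist (m t) (m s) + etaStar F xbar A S T s ≤ etaStar F xbar A S T t :=
    fun s t hs hst ht => add_etaStar_le fun δ hδ ε hε =>
      ((hctrl δ hδ ε hε).comp_tendsto hφ.tendsto_atTop).edist_add_rightNormalize_le
        (etaE_mono hε) (etaE_of_le le_rfl) h𝒜 h𝒜S hconv hrc hs hst ht
  have hT : etaStar F xbar A S T T ≠ ⊤ := by simpa [etaStar] using hBV.ne
  refine ⟨m, 𝒜, φ, boundedVariationOn_Icc_of_edist_add_le hest hT, hrc, h𝒜, h𝒜S, hφ, hconv,
    fun s t hs hst ht => ?_⟩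
  rw [← dist_eq_norm, ← edist_dist]
  exact ENNReal.le_sub_of_add_le_right (ne_top_of_le_ne_top hT (le_add_self.trans
    (hest s T hs (hst.trans ht) le_rfl))) (hest s t hs hst ht)

/-- interpolation lemma.  Given partitions `𝒯_i` of `[S,T]` with mesh
tending to `0`, bounded initial values `m₀^i`, and jumps `d_j^i` dominated by the
increments of the perturbed cumulative variation functions, some subsequence of the
piecewise constant functions `m_i` converges, off a countable set, to a function `m` of
bounded variation, right continuous on `(S,T)`, whose increments are dominated by those
of the normalized cumulative variation function `η*`. -/
theorem stmt11 {n k : ℕ} (S T : ℝ) (hST : S < T)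
    (A : Set (Eucl k)) (hA : IsCompact A)
    (F : ℝ → Eucl n → Eucl k → Set (Eucl n))
    (xbar : ℝ → Eucl n) (hx : ContinuousOn xbar (Icc S T))
    (hBV : eta F xbar A S T < ⊤)
    (δbar : ℝ) (hδbar : 0 < δbar) (hfin : etaD F xbar A S δbar T < ⊤)
    (hC1 : HypC1 F xbar A S T δbar)
    (γ : ℝ → ℝ) (hC2 : HypC2 F xbar A S T δbar γ)
    (N : ℕ → ℕ) (τ : ℕ → ℕ → ℝ) (hpart : ∀ i, IsPartition S T (N i) (τ i))
    (m0 : ℕ → Eucl n) (d : ℕ → ℕ → Eucl n)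
    (hA1 : ∀ ε > (0 : ℝ), ∃ I0 : ℕ, ∀ i ≥ I0, MeshLE (N i) (τ i) ε)
    (hA2 : ∃ M : ℝ, ∀ i, ‖m0 i‖ ≤ M)
    (I : ℝ → ℝ → ℕ)
    (hA3 : ∀ ε > (0 : ℝ), ∀ δ > (0 : ℝ), ∀ i ≥ I ε δ, ∀ j : ℕ, 1 ≤ j → j ≤ N i →
      ENNReal.ofReal ‖d i j‖ ≤
        etaE F xbar A S δ ε (τ i j) - etaE F xbar A S δ ε (τ i (j - 1))) :
    ∃ (m : ℝ → Eucl n) (𝒜 : Set ℝ) (φ : ℕ → ℕ),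
      BoundedVariationOn m (Icc S T) ∧
      (∀ t ∈ Ioo S T, ContinuousWithinAt m (Ici t) t) ∧
      𝒜.Countable ∧ 𝒜 ⊆ Ioo S T ∧ StrictMono φ ∧
      (∀ t ∈ Icc S T \ 𝒜,
        Tendsto (fun i => stepFun T (N (φ i)) (τ (φ i)) (m0 (φ i)) (d (φ i)) t)
          atTop (𝓝 (m t))) ∧
      (∀ s t : ℝ, S ≤ s → s ≤ t → t ≤ T →
        ENNReal.ofReal ‖m t - m s‖ ≤
          etaStar F xbar A S T t - etaStar F xbar A S T s) :=
  stmt11_general S T hST A F xbar hBV N τ hpart m0 d hA1 hA2 I hA3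
end
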